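/- arXiv:2003.03540 — 6 statements merged into one kernel-verified Lean document; each statement's English description precedes it below -/
import Mathlib

section
/- Fix γ > 0, μ ∈ ℝ, a non-probe paper j with true score y_j, a nonempty finite set G of evaluators, and for each i ∈ G a nonempty finite probe set P_i of size x with true scores y : P_i → ℝ, probe noises n_i : P_i → ℝ, and non-probe noise n_ij ∈ ℝ. For any choice of biases (b_i)_{i∈G}, define reports ỹ_k^(i) = y_k + b_i + n_ik for k ∈ P_i and ỹ_j^(i) = y_j + b_i + n_ij, estimates b̂_i = (1/x) Σ_{k∈P_i} (ỹ_k^(i) − y_k) and τ̂_i = x / Σ_{k∈P_i} (ỹ_k^(i) − (y_k + b̂_i))² (assuming the denominator is nonzero), and the ISWDM score r_j* = (√γ μ + Σ_{i∈G} √τ̂_i (ỹ_j^(i) − b̂_i)) / (√γ + Σ_{i∈G} √τ̂_i). Then r_j* takes the same value for every choice of the biases (b_i)_{i∈G}; i.e., r_j* is a function of the true scores and noises alone. -/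
/-- The bias estimate of an evaluator from true scores `y` and reports `ytil`
on the probe set `P` of size `x`. -/
noncomputable def biasEst {κ : Type*} (x : ℕ) (P : Finset κ) (y ytil : κ → ℝ) : ℝ :=
  (1 / (x : ℝ)) * ∑ k ∈ P, (ytil k - y k)

/-- The reliability estimate of an evaluator: `x` over the sum of squared
de-biased residuals on the probe set. -/
noncomputable def relEst {κ : Type*} (x : ℕ) (P : Finset κ) (y ytil : κ → ℝ) : ℝ :=
  (x : ℝ) / ∑ k ∈ P, (ytil k - (y k + biasEst x P y ytil)) ^ 2

/-- The inverse standard-deviation weighted de-biased mean with prior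
precision `γ`, prior mean `μ`, weights `w` and values `v`. -/
noncomputable def iswdm {ι : Type*} (γ μ : ℝ) (G : Finset ι) (w v : ι → ℝ) : ℝ :=
  (Real.sqrt γ * μ + ∑ i ∈ G, w i * v i) / (Real.sqrt γ + ∑ i ∈ G, w i)

lemma biasEst_shift {κ : Type*} (x : ℕ) (hx : x ≠ 0) (P : Finset κ) (hP : P.card = x)
    (y : κ → ℝ) (β : ℝ) (ν : κ → ℝ) :
    biasEst x P y (fun k => y k + β + ν k) = β + (1 / (x : ℝ)) * ∑ k ∈ P, ν k := by
  have hx' : (x : ℝ) ≠ 0 := Nat.cast_ne_zero.mpr hx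
  unfold biasEst
  have : ∀ k ∈ P, (y k + β + ν k) - y k = β + ν k := by intro k _; ring
  rw [Finset.sum_congr rfl this, Finset.sum_add_distrib, Finset.sum_const, hP]
  field_simp
  ring

/-- The ISWDM score of a non-probe paper `j`, computed from the
reports `ỹ_k^(i) = y_k + b_i + n_ik` and `ỹ_j^(i) = y_j + b_i + n_ij` with
estimates `b̂_i` and `τ̂_i` (denominators nonzero), takes the same value for
every choice of the bias profile `(b_i)_{i∈G}`. -/
theorem iswdm_bias_independent {ι κ : Type*} (γ μ yj : ℝ) (hγ : 0 < γ)
    (G : Finset ι) (hG : G.Nonempty)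
    (x : ℕ) (P : ι → Finset κ) (hx : ∀ i ∈ G, (P i).card = x)
    (hPne : ∀ i ∈ G, (P i).Nonempty)
    (y : κ → ℝ) (n : ι → κ → ℝ) (nj : ι → ℝ)
    (hdenom : ∀ (b : ι → ℝ), ∀ i ∈ G,
      ∑ k ∈ P i, ((y k + b i + n i k)
        - (y k + biasEst x (P i) y (fun k => y k + b i + n i k))) ^ 2 ≠ 0)
    (b b' : ι → ℝ) :
    iswdm γ μ G
        (fun i => Real.sqrt (relEst x (P i) y (fun k => y k + b i + n i k)))
        (fun i => (yj + b i + nj i)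
          - biasEst x (P i) y (fun k => y k + b i + n i k))
      = iswdm γ μ G
        (fun i => Real.sqrt (relEst x (P i) y (fun k => y k + b' i + n i k)))
        (fun i => (yj + b' i + nj i)
          - biasEst x (P i) y (fun k => y k + b' i + n i k)) := by
  have hkey : ∀ (β : ι → ℝ), ∀ i ∈ G,
      biasEst x (P i) y (fun k => y k + β i + n i k)
        = β i + (1 / (x : ℝ)) * ∑ k ∈ P i, n i k := by
    intro β i hi
    have hxne : x ≠ 0 := by
      intro h
      have := hPne i hi
      rw [← Finset.card_pos, hx i hi, h] at this
      exact lt_irrefl 0 this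
    exact biasEst_shift x hxne (P i) (hx i hi) y (β i) (n i)
  have hw : ∀ i ∈ G,
      relEst x (P i) y (fun k => y k + b i + n i k)
        = relEst x (P i) y (fun k => y k + b' i + n i k) := by
    intro i hi
    unfold relEst
    congr 1
    apply Finset.sum_congr rfl
    intro k hk
    rw [hkey b i hi, hkey b' i hi]
    ring
  have hv : ∀ i ∈ G,
      (yj + b i + nj i) - biasEst x (P i) y (fun k => y k + b i + n i k)
        = (yj + b' i + nj i) - biasEst x (P i) y (fun k => y k + b' i + n i k) := by
    intro i hi
    rw [hkey b i hi, hkey b' i hi]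
    ring
  unfold iswdm
  congr 2
  · apply Finset.sum_congr rfl
    intro i hi
    dsimp only
    rw [hw i hi, hv i hi]
  · apply Finset.sum_congr rfl
    intro i hi
    dsimp only
    rw [hw i hi]
end

section
/- Under the SkillCheck grading model with γ > 0, reliabilities τ̂_i ≥ 0, probe sets P_i of size x, probe noises n_ik and non-probe noises n_ij, the ISWDM score r_j* of non-probe paper j satisfies r_j* − y_j ≤ 0 if and only if √γ · (y_j − μ) ≥ Σ_{i∈G(j)} √τ̂_i · (n_ij − (1/x) Σ_{k∈P_i} n_ik). In particular, the threshold on y_j above which a regrading request is raised (the case r_j* < y_j) is determined by the noises alone and is independent of the evaluators' biases. -/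
/-- With `γ > 0`, reliabilities `τ̂_i ≥ 0`, probe sets `P_i` of
size `x`, probe noises `n_ik` and non-probe noises `n_ij` (so that the
de-biased report of evaluator `i` on paper `j` is
`y_j + n_ij − (1/x) Σ_{k∈P_i} n_ik`), the ISWDM score `r_j*` satisfies
`r_j* − y_j ≤ 0` iff `√γ (y_j − μ) ≥ Σ_i √τ̂_i (n_ij − (1/x) Σ_{k∈P_i} n_ik)`:
the regrading threshold is determined by the noises alone. -/
theorem iswdm_regrading_threshold {ι κ : Type*} (γ μ yj : ℝ) (hγ : 0 < γ)
    (G : Finset ι) (τ : ι → ℝ) (hτ : ∀ i ∈ G, 0 ≤ τ i)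
    (x : ℕ) (P : ι → Finset κ) (hx : ∀ i ∈ G, (P i).card = x)
    (hPne : ∀ i ∈ G, (P i).Nonempty)
    (n : ι → κ → ℝ) (nj : ι → ℝ) :
    (Real.sqrt γ * μ + ∑ i ∈ G, Real.sqrt (τ i)
          * (yj + (nj i - (1 / (x : ℝ)) * ∑ k ∈ P i, n i k)))
        / (Real.sqrt γ + ∑ i ∈ G, Real.sqrt (τ i)) - yj ≤ 0
      ↔ Real.sqrt γ * (yj - μ)
          ≥ ∑ i ∈ G, Real.sqrt (τ i) * (nj i - (1 / (x : ℝ)) * ∑ k ∈ P i, n i k) := by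
  have hD : 0 < Real.sqrt γ + ∑ i ∈ G, Real.sqrt (τ i) := by
    have h1 : 0 < Real.sqrt γ := Real.sqrt_pos.mpr hγ
    have h2 : 0 ≤ ∑ i ∈ G, Real.sqrt (τ i) :=
      Finset.sum_nonneg fun i _ => Real.sqrt_nonneg _
    linarith
  rw [sub_nonpos, div_le_iff₀ hD, ge_iff_le]
  simp only [mul_add, Finset.sum_add_distrib, ← Finset.sum_mul]
  constructor <;> intro h <;> nlinarith [h]
end

section
/- Fix γ > 0, μ, y_j ∈ ℝ, standardized noises m_ik (k in a probe set P_i of size x) and m_ij with sample standard deviation s_i > 0, and constants Z_{-i} ∈ ℝ and X_{-i} ≥ √γ > 0 collecting the other evaluators' contributions. For σ > 0 define D(σ) := (Z_{-i} s_i σ + σ (m_ij − m̄_i)) / (X_{-i} s_i σ + 1), the deviation r_j* − y_j of the ISWDM score when evaluator i's noise scale is σ. Then |D(σ)| does not depend on evaluator i's bias b_i, and σ ↦ |D(σ)| is nondecreasing: for all 0 < σ' ≤ σ, |D(σ')| ≤ |D(σ)|. -/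
/-- The deviation `r_j* − y_j` of the ISWDM score, computed from evaluator `i`'s
biased reports (bias `b`, noise scale `σ`, standardized noises `m`), with the
other evaluators' contributions collected in the constants `Z` and `X`:
numerator `Z s σ` plus the de-biased deviation of `i`'s report on paper `j`,
over `X s σ + 1`. -/
noncomputable def iswdmDev {α : Type*} (P : Finset α) (x : ℕ) (y : α → ℝ)
    (yj mij : ℝ) (m : α → ℝ) (s Z X : ℝ) (b σ : ℝ) : ℝ :=
  (Z * s * σ +
      (((yj + b + σ * mij)
        - (1 / (x : ℝ)) * ∑ k ∈ P, ((y k + b + σ * m k) - y k)) - yj))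
    / (X * s * σ + 1)

/-- For `γ > 0`, standardized noises `m_ik` (on a probe set of
size `x`) and `m_ij` with sample standard deviation `s_i > 0`, and constants
`Z_{-i} ∈ ℝ`, `X_{-i} ≥ √γ > 0`, the deviation
`D(σ) = (Z_{-i} s_i σ + σ (m_ij − m̄_i)) / (X_{-i} s_i σ + 1)` of the ISWDM
score does not depend on evaluator `i`'s bias `b_i` (and equals the displayed
formula), and `σ ↦ |D(σ)|` is nondecreasing: `0 < σ' ≤ σ → |D(σ')| ≤ |D(σ)|`. -/
theorem iswdm_deviation_bias_free_and_monotone {α : Type*} (γ μ yj : ℝ)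
    (hγ : 0 < γ) (P : Finset α) (hP : P.Nonempty) (x : ℕ) (hx : P.card = x)
    (y m : α → ℝ) (mij : ℝ)
    (mbar : ℝ) (hmbar : mbar = (1 / (x : ℝ)) * ∑ k ∈ P, m k)
    (s : ℝ) (hs : s = Real.sqrt ((1 / (x : ℝ)) * ∑ k ∈ P, (m k - mbar) ^ 2))
    (hspos : 0 < s)
    (Z X : ℝ) (hX : Real.sqrt γ ≤ X) :
    (∀ b b' σ : ℝ, 0 < σ →
      iswdmDev P x y yj mij m s Z X b σ
        = (Z * s * σ + σ * (mij - mbar)) / (X * s * σ + 1) ∧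
      |iswdmDev P x y yj mij m s Z X b σ|
        = |iswdmDev P x y yj mij m s Z X b' σ|) ∧
    (∀ b σ' σ : ℝ, 0 < σ' → σ' ≤ σ →
      |iswdmDev P x y yj mij m s Z X b σ'|
        ≤ |iswdmDev P x y yj mij m s Z X b σ|) := by
  have hxpos : 0 < (x:ℝ) := by
    have h := hP.card_pos
    rw [hx] at h
    exact_mod_cast h
  have hXpos : 0 < X := lt_of_lt_of_le (Real.sqrt_pos.mpr hγ) hX
  have key : ∀ b σ : ℝ, iswdmDev P x y yj mij m s Z X b σ
      = (Z * s * σ + σ * (mij - mbar)) / (X * s * σ + 1) := by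
    intro b σ
    unfold iswdmDev
    congr 1
    have hsum : ∑ k ∈ P, ((y k + b + σ * m k) - y k)
        = (x : ℝ) * b + σ * ∑ k ∈ P, m k := by
      rw [Finset.sum_congr rfl (fun k _ => by ring :
        ∀ k ∈ P, (y k + b + σ * m k) - y k = b + σ * m k)]
      rw [Finset.sum_add_distrib, Finset.sum_const, hx, ← Finset.mul_sum]
      push_cast
      ring
    rw [hsum, hmbar]
    field_simp
    ring
  have habs : ∀ b σ : ℝ, 0 < σ → |iswdmDev P x y yj mij m s Z X b σ|
      = |Z * s + (mij - mbar)| * σ / (X * s * σ + 1) := by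
    intro b σ hσ
    have hden : 0 < X * s * σ + 1 := by positivity
    rw [key b σ, abs_div, abs_of_pos hden]
    congr 1
    rw [show Z * s * σ + σ * (mij - mbar) = (Z * s + (mij - mbar)) * σ by ring,
      abs_mul, abs_of_pos hσ]
  refine ⟨fun b b' σ hσ => ⟨key b σ, by rw [habs b σ hσ, habs b' σ hσ]⟩,
    fun b σ' σ hσ' hle => ?_⟩
  have hσ : 0 < σ := lt_of_lt_of_le hσ' hle
  rw [habs b σ' hσ', habs b σ hσ]
  have hden' : 0 < X * s * σ' + 1 := by positivity
  have hden : 0 < X * s * σ + 1 := by positivity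
  rw [div_le_div_iff₀ hden' hden]
  have hXs : 0 ≤ X * s := le_of_lt (by positivity)
  nlinarith [abs_nonneg (Z * s + (mij - mbar)), mul_le_mul_of_nonneg_left hle hXs]
end

section
/- Let A ∈ ℝ and B ≥ 0. The function W : [0, ∞) → ℝ defined by W(σ) = −(σ A / (B σ + 1))² is nonincreasing: for all 0 ≤ σ' ≤ σ, W(σ) ≤ W(σ'). Consequently, in the SkillCheck model the welfare R(r_j*, y_j) = −(r_j* − y_j)², viewed as a function of evaluator i's noise standard deviation σ = 1/√τ_i (with all other quantities held fixed), is nonincreasing in σ, i.e., nondecreasing in the reliability τ_i. -/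
/-- For `A ∈ ℝ` and `B ≥ 0`, the squared-error welfare
`W(σ) = −(σ A / (B σ + 1))²` is nonincreasing on `[0, ∞)`: for
`0 ≤ σ' ≤ σ`, `W(σ) ≤ W(σ')`. Hence the welfare is nondecreasing in the
evaluator's reliability. -/
theorem squared_error_welfare_antitone (A B : ℝ) (hB : 0 ≤ B)
    (σ' σ : ℝ) (hσ' : 0 ≤ σ') (hσ : σ' ≤ σ) :
    -(σ * A / (B * σ + 1)) ^ 2 ≤ -(σ' * A / (B * σ' + 1)) ^ 2 := by
  have h1 : (0:ℝ) < B * σ' + 1 := by nlinarith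
  have h2 : (0:ℝ) < B * σ + 1 := by nlinarith
  rw [neg_le_neg_iff, div_pow, div_pow, div_le_div_iff₀ (by positivity) (by positivity)]
  have key : σ' * (B * σ + 1) ≤ σ * (B * σ' + 1) := by nlinarith
  have hnn : 0 ≤ σ' * (B * σ + 1) := by positivity
  have hsq := mul_self_le_mul_self hnn key
  nlinarith [sq_nonneg A, hsq]
end

section
/- Let x ≥ 1 and let ν be the product of x + 1 independent copies of the standard Gaussian measure N(0,1) on ℝ, with coordinates written as m = (m_1, …, m_x, m_{x+1}). Let Z ∈ ℝ and X > 0 be constants, and for m with s(m) := √((1/x) Σ_{k=1}^x (m_k − m̄)²) (where m̄ = (1/x) Σ_{k=1}^x m_k), define for σ ≥ 0 the integrand f_σ(m) = −( σ (Z s(m) + (m_{x+1} − m̄)) / (X s(m) σ + 1) )². Then for every σ ≥ 0 the function f_σ is ν-integrable, and the map σ ↦ ∫ f_σ dν is nonincreasing on [0, ∞): for all 0 ≤ σ' ≤ σ, ∫ f_σ dν ≤ ∫ f_{σ'} dν. -/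
open MeasureTheory ProbabilityTheory

/-- The product of `x + 1` independent standard Gaussians `N(0,1)` on `ℝ`,
governing the standardized noises `(m_1, …, m_x, m_{x+1})`. -/
noncomputable def stdGaussianPi (x : ℕ) : Measure (Fin (x + 1) → ℝ) :=
  Measure.pi fun _ => gaussianReal 0 1

/-- The sample mean of the first `x` coordinates. -/
noncomputable def probeMean (x : ℕ) (m : Fin (x + 1) → ℝ) : ℝ :=
  (1 / (x : ℝ)) * ∑ k : Fin x, m k.castSucc

/-- The sample standard deviation of the first `x` coordinates. -/
noncomputable def probeSD (x : ℕ) (m : Fin (x + 1) → ℝ) : ℝ :=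
  Real.sqrt ((1 / (x : ℝ)) * ∑ k : Fin x, (m k.castSucc - probeMean x m) ^ 2)

/-- The squared-error welfare integrand
`f_σ(m) = −(σ (Z s(m) + (m_{x+1} − m̄)) / (X s(m) σ + 1))²`. -/
noncomputable def welfareIntegrand (x : ℕ) (Z X σ : ℝ)
    (m : Fin (x + 1) → ℝ) : ℝ :=
  -((σ * (Z * probeSD x m + (m (Fin.last x) - probeMean x m))
      / (X * probeSD x m * σ + 1)) ^ 2)

lemma stdGaussianPi_map_eval (x : ℕ) (i : Fin (x+1)) :
    (stdGaussianPi x).map (fun m => m i) = gaussianReal 0 1 := by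
  refine Measure.ext fun s hs => ?_
  rw [stdGaussianPi, Measure.map_apply (measurable_pi_apply i) hs, Set.eval_preimage,
    Measure.pi_pi]
  rw [Fintype.prod_eq_single i (fun j hj => by simp [Function.update_of_ne hj])]
  simp

lemma integrable_sq_gaussian : Integrable (fun y : ℝ => y ^ 2) (gaussianReal 0 1) := by
  rw [gaussianReal_of_var_ne_zero 0 one_ne_zero,
    integrable_withDensity_iff (measurable_gaussianPDF 0 1)
      (ae_of_all _ fun y => ENNReal.ofReal_lt_top)]
  have h : ∀ y : ℝ, (gaussianPDF 0 1 y).toReal = gaussianPDFReal 0 1 y :=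
    fun y => ENNReal.toReal_ofReal (gaussianPDFReal_nonneg _ _ _)
  simp_rw [h, gaussianPDFReal]
  have h2 : Integrable (fun y : ℝ => y ^ (2:ℝ) * Real.exp (-(1/2) * y ^ 2)) :=
    integrable_rpow_mul_exp_neg_mul_sq (by norm_num) (by norm_num)
  simp_rw [show (2:ℝ) = ((2:ℕ):ℝ) by norm_num, Real.rpow_natCast] at h2
  have := h2.const_mul ((Real.sqrt (2 * Real.pi * 1))⁻¹)
  refine this.congr (ae_of_all _ fun y => ?_)
  push_cast
  ring_nf

lemma integrable_coord_sq (x : ℕ) (i : Fin (x+1)) :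
    Integrable (fun m : Fin (x+1) → ℝ => (m i) ^ 2) (stdGaussianPi x) := by
  have h := stdGaussianPi_map_eval x i
  exact (integrable_map_measure (f := fun m : Fin (x+1) → ℝ => m i)
    (by rw [h]; exact integrable_sq_gaussian.1)
    (measurable_pi_apply i).aemeasurable).mp (by rw [h]; exact integrable_sq_gaussian)

lemma measurable_welfareIntegrand (x : ℕ) (Z X σ : ℝ) :
    Measurable (welfareIntegrand x Z X σ) := by
  unfold welfareIntegrand probeSD probeMean
  fun_prop

lemma probeSD_nonneg (x : ℕ) (m : Fin (x+1) → ℝ) : 0 ≤ probeSD x m :=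
  Real.sqrt_nonneg _

lemma probeSD_sq_le (x : ℕ) (hx : 1 ≤ x) (m : Fin (x+1) → ℝ) :
    probeSD x m ^ 2 ≤ 4 * ∑ k : Fin x, (m k.castSucc) ^ 2 := by
  set S := ∑ k : Fin x, (m k.castSucc) ^ 2 with hS
  have hS0 : 0 ≤ S := Finset.sum_nonneg fun _ _ => sq_nonneg _
  have hx0 : (0:ℝ) < x := by exact_mod_cast hx
  have hmean : probeMean x m ^ 2 ≤ S / x := by
    rw [probeMean, mul_pow]
    have := sq_sum_le_card_mul_sum_sq (s := (Finset.univ : Finset (Fin x)))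
      (f := fun k => m k.castSucc)
    simp only [Finset.card_univ, Fintype.card_fin] at this
    calc (1 / (x:ℝ)) ^ 2 * (∑ k : Fin x, m k.castSucc) ^ 2
        ≤ (1 / (x:ℝ)) ^ 2 * ((x:ℝ) * S) := by
          apply mul_le_mul_of_nonneg_left _ (sq_nonneg _)
          exact this
      _ = S / x := by field_simp
  have hsq : probeSD x m ^ 2 = (1 / (x : ℝ)) * ∑ k : Fin x, (m k.castSucc - probeMean x m) ^ 2 := by
    rw [probeSD, Real.sq_sqrt]
    positivity
  rw [hsq]
  have hsum : ∑ k : Fin x, (m k.castSucc - probeMean x m) ^ 2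
      ≤ ∑ k : Fin x, (2 * (m k.castSucc)^2 + 2 * probeMean x m ^ 2) := by
    apply Finset.sum_le_sum
    intro k _
    nlinarith [sq_nonneg (m k.castSucc + probeMean x m)]
  have h2 : ∑ k : Fin x, (2 * (m k.castSucc)^2 + 2 * probeMean x m ^ 2)
      = 2 * S + 2 * x * probeMean x m ^ 2 := by
    rw [Finset.sum_add_distrib, ← Finset.mul_sum, Finset.sum_const]
    simp [hS]
    ring
  have hx1 : 1 / (x:ℝ) ≤ 1 := by
    rw [div_le_one hx0]; exact_mod_cast hx
  have hx1' : (1:ℝ) ≤ x := by exact_mod_cast hx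
  have hSx : S / x ≤ S := by
    rw [div_le_iff₀ hx0]
    nlinarith [mul_nonneg hS0 (by linarith : (0:ℝ) ≤ (x:ℝ) - 1)]
  calc (1 / (x : ℝ)) * ∑ k : Fin x, (m k.castSucc - probeMean x m) ^ 2
      ≤ (1 / (x : ℝ)) * (2 * S + 2 * x * probeMean x m ^ 2) := by
        apply mul_le_mul_of_nonneg_left _ (by positivity)
        rw [← h2]; exact hsum
    _ = 2 * (S / x) + 2 * probeMean x m ^ 2 := by field_simp
    _ ≤ 2 * S + 2 * (S / x) := by nlinarith
    _ ≤ 4 * S := by nlinarith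

lemma probeMean_sq_le (x : ℕ) (hx : 1 ≤ x) (m : Fin (x+1) → ℝ) :
    probeMean x m ^ 2 ≤ ∑ k : Fin x, (m k.castSucc) ^ 2 := by
  set S := ∑ k : Fin x, (m k.castSucc) ^ 2 with hS
  have hS0 : 0 ≤ S := Finset.sum_nonneg fun _ _ => sq_nonneg _
  have hx0 : (0:ℝ) < x := by exact_mod_cast hx
  have hx1 : (1:ℝ) ≤ x := by exact_mod_cast hx
  rw [probeMean, mul_pow]
  have h := sq_sum_le_card_mul_sum_sq (s := (Finset.univ : Finset (Fin x)))
    (f := fun k => m k.castSucc)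
  simp only [Finset.card_univ, Fintype.card_fin] at h
  calc (1 / (x:ℝ)) ^ 2 * (∑ k : Fin x, m k.castSucc) ^ 2
      ≤ (1 / (x:ℝ)) ^ 2 * ((x:ℝ) * S) :=
        mul_le_mul_of_nonneg_left h (sq_nonneg _)
    _ = S / x := by field_simp
    _ ≤ S := by
        rw [div_le_iff₀ hx0]
        nlinarith [mul_nonneg hS0 (by linarith : (0:ℝ) ≤ (x:ℝ) - 1)]

lemma welfare_abs_bound (x : ℕ) (hx : 1 ≤ x) (Z X σ : ℝ) (hX : 0 < X) (hσ : 0 ≤ σ)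
    (m : Fin (x+1) → ℝ) :
    |welfareIntegrand x Z X σ m| ≤ σ^2 * (8*Z^2 + 4) * ∑ k : Fin (x+1), (m k) ^ 2 := by
  set s := probeSD x m with hs
  set d := m (Fin.last x) - probeMean x m with hd
  set S := ∑ k : Fin x, (m k.castSucc) ^ 2 with hS
  set T := (m (Fin.last x)) ^ 2 with hT
  have hS0 : 0 ≤ S := Finset.sum_nonneg fun _ _ => sq_nonneg _
  have hsum : ∑ k : Fin (x+1), (m k) ^ 2 = S + T := by
    rw [Fin.sum_univ_castSucc]
  have hs0 : 0 ≤ s := probeSD_nonneg x m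
  have hD : 1 ≤ X * s * σ + 1 := by nlinarith [mul_nonneg (mul_nonneg hX.le hs0) hσ]
  have habs : |welfareIntegrand x Z X σ m|
      = (σ * (Z * s + d))^2 / (X * s * σ + 1)^2 := by
    rw [welfareIntegrand, abs_neg, abs_sq, div_pow]
  rw [habs, hsum]
  have hle1 : (σ * (Z * s + d))^2 / (X * s * σ + 1)^2 ≤ (σ * (Z * s + d))^2 := by
    apply div_le_self (sq_nonneg _)
    nlinarith
  refine hle1.trans ?_
  have hs2 : s^2 ≤ 4 * S := probeSD_sq_le x hx m
  have hmean2 : probeMean x m ^ 2 ≤ S := probeMean_sq_le x hx m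
  have hd2 : d^2 ≤ 2 * T + 2 * S := by
    rw [hd]
    nlinarith [sq_nonneg (m (Fin.last x) + probeMean x m)]
  have hT0 : 0 ≤ T := sq_nonneg _
  have key : (Z * s + d)^2 ≤ (8*Z^2 + 4) * (S + T) := by
    nlinarith [sq_nonneg (Z * s - d), sq_nonneg Z, mul_nonneg (sq_nonneg Z) hS0,
      mul_nonneg (sq_nonneg Z) hT0]
  calc (σ * (Z * s + d))^2 = σ^2 * (Z * s + d)^2 := by ring
    _ ≤ σ^2 * ((8*Z^2 + 4) * (S + T)) := mul_le_mul_of_nonneg_left key (sq_nonneg _)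
    _ = σ^2 * (8*Z^2 + 4) * (S + T) := by ring

lemma welfare_mono_pointwise (x : ℕ) (Z X : ℝ) (hX : 0 < X) {σ' σ : ℝ}
    (hσ' : 0 ≤ σ') (hσσ : σ' ≤ σ) (m : Fin (x+1) → ℝ) :
    welfareIntegrand x Z X σ m ≤ welfareIntegrand x Z X σ' m := by
  set s := probeSD x m with hs
  set A := Z * s + (m (Fin.last x) - probeMean x m) with hA
  have hs0 : 0 ≤ s := probeSD_nonneg x m
  have hσ : 0 ≤ σ := hσ'.trans hσσ
  have hD' : (0:ℝ) < X * s * σ' + 1 := by nlinarith [mul_nonneg (mul_nonneg hX.le hs0) hσ']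
  have hD : (0:ℝ) < X * s * σ + 1 := by nlinarith [mul_nonneg (mul_nonneg hX.le hs0) hσ]
  have hfrac : σ' / (X * s * σ' + 1) ≤ σ / (X * s * σ + 1) := by
    rw [div_le_div_iff₀ hD' hD]
    nlinarith
  have hfrac0 : 0 ≤ σ' / (X * s * σ' + 1) := div_nonneg hσ' hD'.le
  have hsq : (σ' / (X * s * σ' + 1))^2 * A^2 ≤ (σ / (X * s * σ + 1))^2 * A^2 :=
    mul_le_mul_of_nonneg_right (pow_le_pow_left₀ hfrac0 hfrac 2) (sq_nonneg A)
  unfold welfareIntegrand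
  rw [← hA, ← hs]
  have e1 : (σ * A / (X * s * σ + 1))^2 = (σ / (X * s * σ + 1))^2 * A^2 := by
    field_simp
  have e2 : (σ' * A / (X * s * σ' + 1))^2 = (σ' / (X * s * σ' + 1))^2 * A^2 := by
    field_simp
  rw [e1, e2]
  linarith

/-- EPRM, probabilistic form: for `x ≥ 1`, `Z ∈ ℝ`, `X > 0`,
the integrand `f_σ` is integrable against the product of `x + 1` standard
Gaussians for every `σ ≥ 0`, and the expected welfare `σ ↦ ∫ f_σ dν` is
nonincreasing on `[0, ∞)`. -/
theorem expected_welfare_antitone_in_sigma (x : ℕ) (hx : 1 ≤ x)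
    (Z X : ℝ) (hX : 0 < X) :
    (∀ σ : ℝ, 0 ≤ σ → Integrable (welfareIntegrand x Z X σ) (stdGaussianPi x)) ∧
    (∀ σ' σ : ℝ, 0 ≤ σ' → σ' ≤ σ →
      ∫ m, welfareIntegrand x Z X σ m ∂(stdGaussianPi x)
        ≤ ∫ m, welfareIntegrand x Z X σ' m ∂(stdGaussianPi x)) := by
  have hint : ∀ σ : ℝ, 0 ≤ σ → Integrable (welfareIntegrand x Z X σ) (stdGaussianPi x) := by
    intro σ hσ
    have hg : Integrable (fun m : Fin (x+1) → ℝ =>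
        σ^2 * (8*Z^2 + 4) * ∑ k : Fin (x+1), (m k) ^ 2) (stdGaussianPi x) := by
      apply Integrable.const_mul
      exact integrable_finset_sum _ fun i _ => integrable_coord_sq x i
    refine hg.mono' (measurable_welfareIntegrand x Z X σ).aestronglyMeasurable
      (ae_of_all _ fun m => ?_)
    rw [Real.norm_eq_abs]
    exact welfare_abs_bound x hx Z X σ hX hσ m
  refine ⟨hint, fun σ' σ hσ' hσσ => ?_⟩
  exact integral_mono (hint σ (hσ'.trans hσσ)) (hint σ' hσ')
    (fun m => welfare_mono_pointwise x Z X hX hσ' hσσ m)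
end

section
/- Fix γ > 0, μ ∈ ℝ, a non-probe paper j with true score y_j, a nonempty finite set G of evaluators with probe sets P_i of size x, true probe scores y : P_i → ℝ, and σ_i > 0 for each i ∈ G. Let ν be the product over i ∈ G of the (x+1)-fold product of the Gaussian measure N(0, σ_i²) on ℝ, governing the noises (n_ik)_{k∈P_i} and n_ij of each evaluator. For a bias profile b = (b_i)_{i∈G}, let r_j*(b, n) denote the ISWDM score computed from the reports ỹ_k^(i) = y_k + b_i + n_ik and ỹ_j^(i) = y_j + b_i + n_ij (defined ν-almost everywhere, since the probe-noise sample variance is nonzero ν-a.e. for x ≥ 2), and define U(b) := ∫ −(r_j*(b, n) − y_j)² dν(n). Then U(b) = U(b') for all bias profiles b, b'; i.e., the expected squared-error welfare is independent of the evaluators' biases. -/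
open MeasureTheory ProbabilityTheory

/-- The bias estimate of an evaluator with true probe scores `yi`, bias `bi`,
and noise vector `ni` (first `x` coordinates are probe noises):
`b̂ = (1/x) Σ_{k} (ỹ_k − y_k)` where `ỹ_k = y_k + b + n_k`. -/
noncomputable def biasEst13 (x : ℕ) (yi : Fin x → ℝ) (bi : ℝ)
    (ni : Fin (x + 1) → ℝ) : ℝ :=
  (1 / (x : ℝ)) * ∑ l : Fin x, ((yi l + bi + ni l.castSucc) - yi l)

/-- The reliability estimate: `τ̂ = x / Σ_k (ỹ_k − (y_k + b̂))²`. -/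
noncomputable def relEst13 (x : ℕ) (yi : Fin x → ℝ) (bi : ℝ)
    (ni : Fin (x + 1) → ℝ) : ℝ :=
  (x : ℝ) / ∑ k : Fin x,
    ((yi k + bi + ni k.castSucc) - (yi k + biasEst13 x yi bi ni)) ^ 2

/-- The ISWDM score of the non-probe paper `j` (true score `yj`), from the
noise realization `n` and the bias profile `b`: evaluator `i` reports
`ỹ_j^(i) = y_j + b_i + n_i(last)`, with weight `√τ̂_i` and de-biased report
`ỹ_j^(i) − b̂_i`. -/
noncomputable def iswdm13 {ι : Type*} (γ μ yj : ℝ) (G : Finset ι) (x : ℕ)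
    (y : ι → Fin x → ℝ) (b : ι → ℝ) (n : G → Fin (x + 1) → ℝ) : ℝ :=
  (Real.sqrt γ * μ + ∑ i : G, Real.sqrt (relEst13 x (y i.1) (b i.1) (n i))
      * ((yj + b i.1 + n i (Fin.last x)) - biasEst13 x (y i.1) (b i.1) (n i)))
    / (Real.sqrt γ + ∑ i : G, Real.sqrt (relEst13 x (y i.1) (b i.1) (n i)))


lemma biasEst13_eq (x : ℕ) (hx : (x : ℝ) ≠ 0) (yi : Fin x → ℝ) (bi : ℝ)
    (ni : Fin (x + 1) → ℝ) :
    biasEst13 x yi bi ni = bi + (1 / (x : ℝ)) * ∑ l : Fin x, ni l.castSucc := by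
  unfold biasEst13
  have : ∑ l : Fin x, ((yi l + bi + ni l.castSucc) - yi l)
      = (x : ℝ) * bi + ∑ l : Fin x, ni l.castSucc := by
    rw [Finset.sum_congr rfl (fun l _ => by ring : ∀ l ∈ Finset.univ,
      ((yi l + bi + ni l.castSucc) - yi l) = bi + ni l.castSucc),
      Finset.sum_add_distrib, Finset.sum_const, Finset.card_univ, Fintype.card_fin,
      nsmul_eq_mul]
  rw [this]; field_simp

lemma relEst13_eq (x : ℕ) (hx : (x : ℝ) ≠ 0) (yi : Fin x → ℝ) (bi : ℝ)
    (ni : Fin (x + 1) → ℝ) :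
    relEst13 x yi bi ni = (x : ℝ) / ∑ k : Fin x,
      (ni k.castSucc - (1 / (x : ℝ)) * ∑ l : Fin x, ni l.castSucc) ^ 2 := by
  unfold relEst13
  rw [biasEst13_eq x hx]
  congr 1
  exact Finset.sum_congr rfl fun k _ => by ring

lemma iswdm13_bias_free {ι : Type*} (γ μ yj : ℝ) (G : Finset ι) (x : ℕ)
    (hx : (x : ℝ) ≠ 0) (y : ι → Fin x → ℝ) (b b' : ι → ℝ)
    (n : G → Fin (x + 1) → ℝ) :
    iswdm13 γ μ yj G x y b n = iswdm13 γ μ yj G x y b' n := by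
  unfold iswdm13
  have hrel : ∀ (i : G), relEst13 x (y i.1) (b i.1) (n i)
      = relEst13 x (y i.1) (b' i.1) (n i) := fun i => by
    rw [relEst13_eq x hx, relEst13_eq x hx]
  have hrep : ∀ (i : G), ((yj + b i.1 + n i (Fin.last x))
        - biasEst13 x (y i.1) (b i.1) (n i))
      = ((yj + b' i.1 + n i (Fin.last x))
        - biasEst13 x (y i.1) (b' i.1) (n i)) := fun i => by
    rw [biasEst13_eq x hx, biasEst13_eq x hx]; ring
  simp_rw [hrel, hrep]

/-- EPBI, probabilistic form: with `γ > 0`, `x ≥ 2`, evaluators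
`G` with noise standard deviations `σ_i > 0`, and `ν` the product over `i ∈ G`
of the `(x+1)`-fold product of `N(0, σ_i²)`, the expected squared-error welfare
`U(b) = ∫ −(r_j*(b, n) − y_j)² dν(n)` is the same for all bias profiles. -/
theorem expected_welfare_bias_insensitive {ι : Type*} (γ μ yj : ℝ)
    (hγ : 0 < γ) (G : Finset ι) (hG : G.Nonempty) (x : ℕ) (hx : 2 ≤ x)
    (y : ι → Fin x → ℝ) (σ : ι → ℝ) (hσ : ∀ i ∈ G, 0 < σ i)
    (b b' : ι → ℝ) :
    (∫ n : G → Fin (x + 1) → ℝ, -(iswdm13 γ μ yj G x y b n - yj) ^ 2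
        ∂(Measure.pi fun i : G => Measure.pi fun _ : Fin (x + 1) =>
          gaussianReal 0 ⟨σ i.1 ^ 2, sq_nonneg _⟩))
      = ∫ n : G → Fin (x + 1) → ℝ, -(iswdm13 γ μ yj G x y b' n - yj) ^ 2
        ∂(Measure.pi fun i : G => Measure.pi fun _ : Fin (x + 1) =>
          gaussianReal 0 ⟨σ i.1 ^ 2, sq_nonneg _⟩) := by
  refine integral_congr_ae (Filter.Eventually.of_forall fun n => ?_)
  have hx' : (x : ℝ) ≠ 0 := by positivity
  simp only [iswdm13_bias_free γ μ yj G x hx' y b b' n]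
end
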